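/- arXiv:1701.00356 — 11 statements merged into one kernel-verified Lean document; each statement's English description precedes it below -/
import Mathlib

section
/- The product space {0,1}^κ, where κ = (2^ℵ₀)⁺ is the successor cardinal of the continuum and {0,1} carries the discrete topology, is compact but not e-separable. -/
open Cardinal Set

universe u

/-- A subset `D` of a topological space is closed discrete iff it is closed and
its subspace topology is discrete. -/
def ClosedDiscrete {X : Type u} [TopologicalSpace X] (D : Set X) : Prop :=
  IsClosed D ∧ DiscreteTopology D

/-- A space is `e`-separable iff it has a dense set which is a countable union of
closed discrete sets. -/
def ESeparable (X : Type u) [TopologicalSpace X] : Prop :=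
  ∃ D : ℕ → Set X, (∀ n, ClosedDiscrete (D n)) ∧ Dense (⋃ n, D n)

/-- The density of a space: the least cardinality of a dense subset. -/
noncomputable def density (X : Type u) [TopologicalSpace X] : Cardinal.{u} :=
  sInf {c | ∃ D : Set X, Dense D ∧ #D = c}

/-- The extent of a space: the supremum of the cardinalities of closed discrete subsets. -/
noncomputable def extent (X : Type u) [TopologicalSpace X] : Cardinal.{u} :=
  sSup {c | ∃ D : Set X, ClosedDiscrete D ∧ #D = c}

/-
In a compact space every closed discrete set is finite, so an `e`-separable compact space is
separable. But a dense set `S ⊆ {0,1}^ι` separates the coordinates (`i ↦ (d ↦ d i)` is injective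
on `S`), so `|ι| ≤ 2^|S|`; for `ι = 𝔠⁺` this forbids a countable dense set.
-/

open TopologicalSpace

theorem ClosedDiscrete.finite {X : Type*} [TopologicalSpace X] [CompactSpace X] {D : Set X}
    (hD : ClosedDiscrete D) : D.Finite :=
  hD.1.isCompact.finite (isDiscrete_iff_discreteTopology.mpr hD.2)

theorem ESeparable.separableSpace {X : Type*} [TopologicalSpace X] [CompactSpace X]
    (hX : ESeparable X) : SeparableSpace X := by
  obtain ⟨D, hD, hdense⟩ := hX
  exact ⟨⟨⋃ n, D n, countable_iUnion fun n => (hD n).finite.countable, hdense⟩⟩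

theorem mk_le_two_pow_of_dense {ι : Type u} {S : Set (ι → Bool)} (hS : Dense S) :
    #ι ≤ 2 ^ #S := by
  classical
  have hinj : Function.Injective fun (i : ι) (d : S) => (d : ι → Bool) i := by
    intro i j hij
    have hcoord : (fun x : ι → Bool => x i) = fun x => x j :=
      Continuous.ext_on hS (continuous_apply i) (continuous_apply j)
        fun d hd => congr_fun hij ⟨d, hd⟩
    simpa using congr_fun hcoord fun k => decide (i = k)
  simpa using mk_le_of_injective hinj

theorem mk_le_continuum_of_separableSpace {ι : Type u} [SeparableSpace (ι → Bool)] :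
    #ι ≤ 2 ^ ℵ₀ := by
  obtain ⟨S, hS, hdense⟩ := exists_countable_dense (ι → Bool)
  calc #ι ≤ 2 ^ #S := mk_le_two_pow_of_dense hdense
    _ ≤ 2 ^ ℵ₀ := power_le_power_left two_ne_zero hS.le_aleph0

/-- `{0,1}^{𝔠⁺}` is compact but not `e`-separable. -/
theorem two_pow_continuum_succ_compact_not_eSeparable :
    CompactSpace ((Order.succ (2 ^ ℵ₀ : Cardinal.{0})).out → Bool) ∧
      ¬ ESeparable ((Order.succ (2 ^ ℵ₀ : Cardinal.{0})).out → Bool) := by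
  refine ⟨inferInstance, fun hsep => ?_⟩
  have := hsep.separableSpace
  have hle := mk_le_continuum_of_separableSpace (ι := (Order.succ (2 ^ ℵ₀ : Cardinal.{0})).out)
  rw [mk_out] at hle
  exact (Order.lt_succ _).not_ge hle
end

section
/- Every topological space with a σ-discrete π-base is e-separable. In particular, every metrizable space is e-separable. -/
open Cardinal Set

universe u

/-- A family of subsets of `X` is discrete iff every point of `X` has an open
neighbourhood meeting at most one member of the family. -/
def DiscreteFamily {X : Type u} [TopologicalSpace X] (𝒜 : Set (Set X)) : Prop :=
  ∀ x : X, ∃ U : Set X, IsOpen U ∧ x ∈ U ∧ {A ∈ 𝒜 | (A ∩ U).Nonempty}.Subsingleton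

/-- A π-base for `X`: a family of nonempty open sets such that every nonempty open
set contains a member of the family. -/
def IsPiBase {X : Type u} [TopologicalSpace X] (ℬ : Set (Set X)) : Prop :=
  (∀ B ∈ ℬ, IsOpen B ∧ B.Nonempty) ∧
    ∀ V : Set X, IsOpen V → V.Nonempty → ∃ B ∈ ℬ, B ⊆ V

/-- Key criterion: a set such that every point has an open nbhd meeting it in at most
one point is closed discrete (in a T1 space). -/
lemma closedDiscrete_of_subsingleton_nbhd {X : Type u} [TopologicalSpace X] [T1Space X]
    (D : Set X) (h : ∀ x : X, ∃ U : Set X, IsOpen U ∧ x ∈ U ∧ (D ∩ U).Subsingleton) :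
    IsClosed D ∧ DiscreteTopology D := by
  constructor
  · rw [← isOpen_compl_iff, isOpen_iff_forall_mem_open]
    intro x hx
    obtain ⟨U, hU, hxU, hsub⟩ := h x
    by_cases hne : (D ∩ U).Nonempty
    · obtain ⟨d, hd⟩ := hne
      refine ⟨U ∩ {d}ᶜ, ?_, hU.inter (isClosed_singleton.isOpen_compl), hxU,
        fun hdx => hx ?_⟩
      · intro y ⟨hyU, hyd⟩ hyD
        exact hyd (hsub ⟨hyD, hyU⟩ hd)
      · exact hdx ▸ hd.1
    · refine ⟨U, fun y hyU hyD => hne ⟨y, hyD, hyU⟩, hU, hxU⟩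
  · rw [discreteTopology_subtype_iff]
    intro x hxD
    obtain ⟨U, hU, hxU, hsub⟩ := h x
    rw [Filter.inf_eq_bot_iff]
    refine ⟨U ∩ {x}ᶜ, ?_, D, Filter.mem_principal_self D, ?_⟩
    · exact mem_nhdsWithin.2 ⟨U, hU, hxU, fun y hy => hy⟩
    · ext y
      simp only [mem_inter_iff, mem_compl_iff, mem_singleton_iff, mem_empty_iff_false,
        iff_false, not_and, and_imp]
      intro hyU hyx hyD
      exact hyx (hsub ⟨hyD, hyU⟩ ⟨hxD, hxU⟩)

/-- Every `T₁` space with a σ-discrete π-base is `e`-separable; in particular every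
metrizable space is `e`-separable. -/
theorem eSeparable_of_sigmaDiscrete_piBase :
    (∀ (X : Type u) [TopologicalSpace X] [T1Space X],
      (∃ ℬ : ℕ → Set (Set X), (∀ n, DiscreteFamily (ℬ n)) ∧ IsPiBase (⋃ n, ℬ n)) →
        ESeparable X) ∧
    (∀ (X : Type u) [TopologicalSpace X] [T1Space X] [TopologicalSpace.MetrizableSpace X],
      ESeparable X) := by
  constructor
  · rintro X _ _ ⟨ℬ, hdisc, ⟨hmem, hbase⟩⟩
    -- pick a point from every member of the π-base
    set D : ℕ → Set X := fun n => {x | ∃ B ∈ ℬ n, ∃ h : B.Nonempty, x = h.some} with hD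
    refine ⟨D, fun n => ?_, ?_⟩
    · refine closedDiscrete_of_subsingleton_nbhd _ (fun x => ?_)
      obtain ⟨U, hU, hxU, hsub⟩ := hdisc n x
      refine ⟨U, hU, hxU, ?_⟩
      rintro a ⟨⟨A, hA, hAne, rfl⟩, haU⟩ b ⟨⟨B, hB, hBne, rfl⟩, hbU⟩
      have : A = B := hsub ⟨hA, hAne.some, hAne.some_mem, haU⟩ ⟨hB, hBne.some, hBne.some_mem, hbU⟩
      subst this
      rfl
    · rw [dense_iff_inter_open]
      intro V hV hVne
      obtain ⟨B, hB, hBV⟩ := hbase V hV hVne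
      obtain ⟨n, hBn⟩ := mem_iUnion.1 hB
      have hBne : B.Nonempty := (hmem B hB).2
      exact ⟨hBne.some, hBV hBne.some_mem, mem_iUnion.2 ⟨n, B, hBn, hBne, rfl⟩⟩
  · intro X _ _ _
    letI := TopologicalSpace.metrizableSpaceMetric X
    -- maximal (1/(n+1))-separated sets
    have key : ∀ n : ℕ, ∃ D : Set X,
        (∀ a ∈ D, ∀ b ∈ D, a ≠ b → 1 / ((n : ℝ) + 1) ≤ dist a b) ∧
        (∀ x : X, x ∉ D → ∃ d ∈ D, dist x d < 1 / ((n : ℝ) + 1)) := by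
      intro n
      set ε : ℝ := 1 / ((n : ℝ) + 1)
      obtain ⟨m, hm⟩ := zorn_subset
        {S : Set X | ∀ a ∈ S, ∀ b ∈ S, a ≠ b → ε ≤ dist a b} (fun c hc hchain =>
          ⟨⋃₀ c, fun a ha b hb hab => by
            obtain ⟨s, hs, has⟩ := ha
            obtain ⟨t, ht, hbt⟩ := hb
            rcases hchain.total hs ht with h | h
            · exact hc ht a (h has) b hbt hab
            · exact hc hs a has b (h hbt) hab,
          fun s hs => subset_sUnion_of_mem hs⟩)
      refine ⟨m, hm.1, fun x hx => ?_⟩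
      by_contra hcon
      push_neg at hcon
      have : insert x m ∈ {S : Set X | ∀ a ∈ S, ∀ b ∈ S, a ≠ b → ε ≤ dist a b} := by
        rintro a (rfl | ha) b (rfl | hb) hab
        · exact absurd rfl hab
        · exact hcon b hb
        · rw [dist_comm]; exact hcon a ha
        · exact hm.1 a ha b hb hab
      have := hm.2 this (subset_insert x m)
      exact hx (this (mem_insert x m))
    choose D hsep hmax using key
    refine ⟨D, fun n => ?_, ?_⟩
    · refine closedDiscrete_of_subsingleton_nbhd _ (fun x => ?_)
      refine ⟨Metric.ball x (1 / ((n : ℝ) + 1) / 2), Metric.isOpen_ball,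
        Metric.mem_ball_self (by positivity), ?_⟩
      rintro a ⟨haD, haB⟩ b ⟨hbD, hbB⟩
      by_contra hab
      rw [Metric.mem_ball] at haB hbB
      have h1 : dist a b < 1 / ((n : ℝ) + 1) := by
        have := dist_triangle a x b
        rw [dist_comm x b] at this
        linarith
      linarith [hsep n a haD b hbD hab]
    · rw [dense_iff_inter_open]
      intro V hV hVne
      obtain ⟨x, hx⟩ := hVne
      obtain ⟨r, hr, hball⟩ := Metric.isOpen_iff.1 hV x hx
      obtain ⟨n, hn⟩ := exists_nat_one_div_lt hr
      by_cases hxD : x ∈ D n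
      · exact ⟨x, hx, mem_iUnion.2 ⟨n, hxD⟩⟩
      · obtain ⟨d, hd, hdist⟩ := hmax n x hxD
        refine ⟨d, hball ?_, mem_iUnion.2 ⟨n, hd⟩⟩
        rw [Metric.mem_ball, dist_comm]
        exact hdist.trans hn
end

section
/- Every developable T₁ topological space is e-separable. -/
open Cardinal Set

universe u

/-!
For each `n` choose, by Zorn's lemma, a maximal set `D n` no two points of which lie in a
common member of `𝒢 n`. Every member of the open cover `𝒢 n` meets `D n` in at most one
point, so `D n` is closed discrete in the `T₁` space `X`. By maximality every star
`st(x, 𝒢 n)` meets `D n`, and since the stars at `x` form a neighbourhood base, `⋃ n, D n`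
is dense.
-/

open Topology

theorem Set.exists_maximal_pairwise {α : Type*} {r : α → α → Prop} [Std.Symm r] :
    ∃ D : Set α, D.Pairwise r ∧ ∀ x ∉ D, ∃ d ∈ D, ¬ r x d := by
  obtain ⟨D, hD⟩ := zorn_subset {S : Set α | S.Pairwise r} fun c hc hchain =>
    ⟨⋃₀ c, hchain.pairwise_sUnion.2 hc, fun _ => subset_sUnion_of_mem⟩
  refine ⟨D, hD.prop, fun x hx => ?_⟩
  by_contra! h
  exact hx <| hD.mem_of_prop_insert <|
    hD.prop.insert fun d hd _ => ⟨h d hd, Std.Symm.symm _ _ (h d hd)⟩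

theorem closedDiscrete_of_forall_exists_mem_nhds_finite {X : Type u} [TopologicalSpace X]
    [T1Space X] {D : Set X} (h : ∀ x, ∃ U ∈ 𝓝 x, (D ∩ U).Finite) : ClosedDiscrete D := by
  have : IsClosed D ∧ IsDiscrete D := isClosed_and_discrete_iff.2 fun x => by
    obtain ⟨U, hU, hfin⟩ := h x
    rw [Filter.disjoint_principal_right]
    filter_upwards [nhdsWithin_le_nhds hU, nhdsNE_le_cofinite x hfin.compl_mem_cofinite]
      with y hyU hy hyD using hy ⟨hyD, hyU⟩
  exact ⟨this.1, isDiscrete_iff_discreteTopology.1 this.2⟩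

section Star

variable {X : Type u} {𝒰 : Set (Set X)}

/-- The star `st(x, 𝒰)`. -/
def coverStar (𝒰 : Set (Set X)) (x : X) : Set X :=
  ⋃₀ {U ∈ 𝒰 | x ∈ U}

theorem mem_coverStar_comm {x y : X} : y ∈ coverStar 𝒰 x ↔ x ∈ coverStar 𝒰 y :=
  ⟨fun ⟨U, ⟨hU, hxU⟩, hyU⟩ => ⟨U, ⟨hU, hyU⟩, hxU⟩,
    fun ⟨U, ⟨hU, hyU⟩, hxU⟩ => ⟨U, ⟨hU, hxU⟩, hyU⟩⟩

theorem mem_coverStar_self (hcover : ⋃₀ 𝒰 = Set.univ) (x : X) : x ∈ coverStar 𝒰 x := by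
  obtain ⟨U, hU, hxU⟩ := mem_sUnion.1 (hcover ▸ mem_univ x)
  exact ⟨U, ⟨hU, hxU⟩, hxU⟩

theorem closedDiscrete_of_pairwise_notMem_coverStar [TopologicalSpace X] [T1Space X]
    (hopen : ∀ U ∈ 𝒰, IsOpen U) (hcover : ⋃₀ 𝒰 = Set.univ) {D : Set X}
    (hD : D.Pairwise fun x y => y ∉ coverStar 𝒰 x) : ClosedDiscrete D := by
  refine closedDiscrete_of_forall_exists_mem_nhds_finite fun x => ?_
  obtain ⟨U, ⟨hU, hxU⟩, -⟩ := mem_coverStar_self hcover x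
  refine ⟨U, (hopen U hU).mem_nhds hxU, Subsingleton.finite fun a ha b hb => ?_⟩
  by_contra hab
  exact hD ha.1 hb.1 hab ⟨U, ⟨hU, ha.2⟩, hb.2⟩

theorem dense_iUnion_of_forall_inter_coverStar_nonempty [TopologicalSpace X]
    {𝒢 : ℕ → Set (Set X)} {D : ℕ → Set X}
    (hdev : ∀ (x : X) (V : Set X), IsOpen V → x ∈ V → ∃ n, coverStar (𝒢 n) x ⊆ V)
    (hD : ∀ n x, (D n ∩ coverStar (𝒢 n) x).Nonempty) : Dense (⋃ n, D n) := by
  refine dense_iff_inter_open.2 fun V hV ⟨x, hxV⟩ => ?_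
  obtain ⟨n, hn⟩ := hdev x V hV hxV
  obtain ⟨d, hdD, hdx⟩ := hD n x
  exact ⟨d, hn hdx, mem_iUnion_of_mem n hdD⟩

end Star

/-- Every developable `T₁` space is `e`-separable.  A development is a sequence
`(𝒢 n)` of open covers such that the stars `st(x, 𝒢 n) = ⋃₀ {U ∈ 𝒢 n | x ∈ U}`
form a neighbourhood base at every point. -/
theorem eSeparable_of_developable {X : Type u} [TopologicalSpace X] [T1Space X]
    (𝒢 : ℕ → Set (Set X))
    (hopen : ∀ n, ∀ U ∈ 𝒢 n, IsOpen U)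
    (hcover : ∀ n, ⋃₀ 𝒢 n = Set.univ)
    (hdev : ∀ (x : X) (V : Set X), IsOpen V → x ∈ V →
      ∃ n, ⋃₀ {U ∈ 𝒢 n | x ∈ U} ⊆ V) :
    ESeparable X := by
  have (n : ℕ) : Std.Symm fun x y : X => y ∉ coverStar (𝒢 n) x :=
    ⟨fun _ _ h => mt mem_coverStar_comm.2 h⟩
  choose D hpair hmax using fun n =>
    exists_maximal_pairwise (r := fun x y => y ∉ coverStar (𝒢 n) x)
  refine ⟨D, fun n => closedDiscrete_of_pairwise_notMem_coverStar (hopen n) (hcover n) (hpair n),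
    dense_iUnion_of_forall_inter_coverStar_nonempty hdev fun n x => ?_⟩
  by_cases hx : x ∈ D n
  · exact ⟨x, hx, mem_coverStar_self (hcover n) x⟩
  · obtain ⟨d, hd, hdx⟩ := hmax n x hx
    exact ⟨d, hd, not_not.1 hdx⟩
end

section
/- Let κ be an infinite cardinal and suppose 𝒰 is a nonprincipal ultrafilter on κ that is countably complete (closed under countable intersections) and uniform (every member of 𝒰 has cardinality κ). Then the product space ℕ^κ (ℕ discrete, product topology) contains no closed discrete subset of cardinality κ; consequently, every subset of ℕ^κ of cardinality κ has an accumulation point, and ℕ^κ is not e-separable. -/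
open Cardinal Set

universe u

/-- In a countably complete ultrafilter, every `ℕ`-valued function is constant on
a set of the ultrafilter. -/
lemma uf_exists_val {X : Type*} (𝒱 : Ultrafilter X)
    (hcc : ∀ s : ℕ → Set X, (∀ n, s n ∈ 𝒱) → ⋂ n, s n ∈ 𝒱) (f : X → ℕ) :
    ∃ m : ℕ, {x | f x = m} ∈ 𝒱 := by
  by_contra h
  push_neg at h
  have h2 : ∀ m : ℕ, {x | f x ≠ m} ∈ 𝒱 := by
    intro m
    have := Ultrafilter.compl_mem_iff_notMem.mpr (h m)
    simpa [Set.compl_setOf] using this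
  have h3 := hcc _ h2
  have h4 : (⋂ m : ℕ, {x | f x ≠ m}) = (∅ : Set X) := by
    ext x
    simp only [mem_iInter, mem_setOf_eq, mem_empty_iff_false, iff_false, not_forall, not_not]
    exact ⟨f x, rfl⟩
  rw [h4] at h3
  exact 𝒱.empty_notMem h3

/-- Every `κ`-sized subset of `ℕ^κ` has an accumulation point. -/
lemma acc_point {κ : Cardinal.{u}} (hκ : ℵ₀ ≤ κ) (𝒰 : Ultrafilter κ.out)
    (hcc : ∀ s : ℕ → Set κ.out, (∀ n, s n ∈ 𝒰) → ⋂ n, s n ∈ 𝒰)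
    (huniform : ∀ A ∈ 𝒰, #A = κ)
    (A : Set (κ.out → ℕ)) (hA : #A = κ) :
    ∃ y : κ.out → ℕ, ∀ V : Set (κ.out → ℕ), IsOpen V → y ∈ V →
      ∃ a ∈ A, a ≠ y ∧ a ∈ V := by
  have hEquiv : Nonempty (κ.out ≃ ↥A) := by
    rw [← Cardinal.eq, Cardinal.mk_out, hA]
  obtain ⟨e⟩ := hEquiv
  set f : κ.out → (κ.out → ℕ) := fun α => (e α : κ.out → ℕ) with hfdef
  have hfinj : Function.Injective f := fun a b hab => e.injective (Subtype.val_injective hab)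
  have hfA : ∀ α, f α ∈ A := fun α => (e α).2
  choose y hy using fun i => uf_exists_val 𝒰 hcc (fun α => f α i)
  refine ⟨y, ?_⟩
  intro V hV hyV
  obtain ⟨I, u, hu, hsub⟩ := isOpen_pi_iff.mp hV y hyV
  have hS : (⋂ i ∈ I, {α | f α i = y i}) ∈ 𝒰 :=
    (Filter.biInter_finset_mem I).mpr fun i _ => hy i
  have hinf : (⋂ i ∈ I, {α | f α i = y i}).Infinite := by
    rw [← Set.infinite_coe_iff, Cardinal.infinite_iff, huniform _ hS]
    exact hκ
  have hss : {α | f α = y}.Subsingleton := fun a ha b hb => hfinj (ha.trans hb.symm)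
  obtain ⟨α, hαS, hαne⟩ := (hinf.diff hss.finite).nonempty
  refine ⟨f α, hfA α, hαne, hsub (Set.mem_pi.mpr fun i hi => ?_)⟩
  have hagree : f α i = y i := Set.mem_iInter₂.mp hαS i (Finset.mem_coe.mp hi)
  rw [hagree]
  exact (hu i (Finset.mem_coe.mp hi)).2

/-- If `κ` is infinite and carries a nonprincipal countably complete uniform
ultrafilter, then `ℕ^κ` has no closed discrete subset of cardinality `κ`; hence
every subset of cardinality `κ` has an accumulation point, and `ℕ^κ` is not
`e`-separable. -/
theorem no_kappa_closedDiscrete_of_countablyComplete_ultrafilter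
    (κ : Cardinal.{u}) (hκ : ℵ₀ ≤ κ) (𝒰 : Ultrafilter κ.out)
    (hcc : ∀ s : ℕ → Set κ.out, (∀ n, s n ∈ 𝒰) → ⋂ n, s n ∈ 𝒰)
    (huniform : ∀ A ∈ 𝒰, #A = κ)
    (hnp : ∀ x : κ.out, 𝒰 ≠ pure x) :
    (¬ ∃ D : Set (κ.out → ℕ), ClosedDiscrete D ∧ #D = κ) ∧
    (∀ A : Set (κ.out → ℕ), #A = κ → ∃ y : κ.out → ℕ,
      ∀ V : Set (κ.out → ℕ), IsOpen V → y ∈ V → ∃ a ∈ A, a ≠ y ∧ a ∈ V) ∧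
    ¬ ESeparable (κ.out → ℕ) := by
  classical
  have acc := fun A hA => acc_point hκ 𝒰 hcc huniform A hA
  refine ⟨?_, acc, ?_⟩
  · rintro ⟨D, ⟨hDc, hDd⟩, hDκ⟩
    obtain ⟨y, hy⟩ := acc D hDκ
    have hyD : y ∈ D := by
      rw [← hDc.closure_eq, mem_closure_iff]
      intro V hV hyV
      obtain ⟨a, haD, _, haV⟩ := hy V hV hyV
      exact ⟨a, haV, haD⟩
    have hopen : IsOpen ({⟨y, hyD⟩} : Set D) := isOpen_discrete _
    obtain ⟨t, ht, hteq⟩ := isOpen_induced_iff.mp hopen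
    have hyt : y ∈ t := by
      have h1 : (⟨y, hyD⟩ : D) ∈ Subtype.val ⁻¹' t := by rw [hteq]; rfl
      exact h1
    obtain ⟨a, haD, hane, hat⟩ := hy t ht hyt
    have h2 : (⟨a, haD⟩ : D) ∈ Subtype.val ⁻¹' t := hat
    rw [hteq] at h2
    exact hane (congrArg Subtype.val h2)
  · rintro ⟨D, hD, hdense⟩
    set E := ⋃ n, D n with hEdef
    -- Step 1: E is closed discrete in the ω-box topology
    have step1 : ∀ x : κ.out → ℕ, ∃ S : Set κ.out, S.Countable ∧
        ∀ z ∈ E, (∀ i ∈ S, z i = x i) → z = x := by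
      intro x
      have hFn : ∀ n : ℕ, ∃ F : Finset κ.out,
          ∀ z ∈ D n, (∀ i ∈ F, z i = x i) → z = x := by
        intro n
        by_cases hx : x ∈ D n
        · haveI := (hD n).2
          have hopen : IsOpen ({⟨x, hx⟩} : Set (D n)) := isOpen_discrete _
          obtain ⟨t, ht, hteq⟩ := isOpen_induced_iff.mp hopen
          have hxt : x ∈ t := by
            have h1 : (⟨x, hx⟩ : D n) ∈ Subtype.val ⁻¹' t := by rw [hteq]; rfl
            exact h1
          obtain ⟨I, u, hu, hsub⟩ := isOpen_pi_iff.mp ht x hxt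
          refine ⟨I, fun z hz hagree => ?_⟩
          have hzt : z ∈ t := hsub (Set.mem_pi.mpr fun i hi => by
            rw [hagree i (Finset.mem_coe.mp hi)]
            exact (hu i (Finset.mem_coe.mp hi)).2)
          have h2 : (⟨z, hz⟩ : D n) ∈ Subtype.val ⁻¹' t := hzt
          rw [hteq] at h2
          exact congrArg Subtype.val h2
        · have hopen : IsOpen (D n)ᶜ := (hD n).1.isOpen_compl
          obtain ⟨I, u, hu, hsub⟩ := isOpen_pi_iff.mp hopen x hx
          refine ⟨I, fun z hz hagree => absurd hz ?_⟩
          exact hsub (Set.mem_pi.mpr fun i hi => by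
            rw [hagree i (Finset.mem_coe.mp hi)]
            exact (hu i (Finset.mem_coe.mp hi)).2)
      choose F hF using hFn
      refine ⟨⋃ n, (F n : Set κ.out), countable_iUnion (fun n => (F n).countable_toSet), ?_⟩
      intro z hz hagree
      obtain ⟨n, hzn⟩ := mem_iUnion.mp hz
      exact hF n z hzn fun i hi =>
        hagree i (mem_iUnion.mpr ⟨n, Finset.mem_coe.mpr hi⟩)
    -- the 𝒰-a.e. value of each function
    choose val hval using fun (z : κ.out → ℕ) => uf_exists_val 𝒰 hcc z
    have hEne : E.Nonempty := hdense.nonempty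
    by_cases hP : ∃ g : κ.out → (κ.out → ℕ), (∀ i, g i ∈ E) ∧
        ∀ w : κ.out → ℕ, {i | g i = w} ∉ 𝒰
    · obtain ⟨g, hgE, hgfib⟩ := hP
      set 𝒱 := 𝒰.map g with h𝒱
      have hccV : ∀ s : ℕ → Set (κ.out → ℕ), (∀ n, s n ∈ 𝒱) → ⋂ n, s n ∈ 𝒱 := by
        intro s hs
        rw [h𝒱, Ultrafilter.mem_map, Set.preimage_iInter]
        exact hcc _ fun n => Ultrafilter.mem_map.mp (hs n)
      choose x hx using fun i => uf_exists_val 𝒱 hccV (fun z => z i)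
      obtain ⟨S, hScnt, hSprop⟩ := step1 x
      have hbox : {z : κ.out → ℕ | ∀ i ∈ S, z i = x i} ∈ 𝒱 := by
        rcases S.eq_empty_or_nonempty with h | h
        · have huniv : {z : κ.out → ℕ | ∀ i ∈ S, z i = x i} = Set.univ := by
            ext z; simp [h]
          rw [huniv]
          exact Filter.univ_mem
        · obtain ⟨r, hr⟩ := Set.Countable.exists_eq_range hScnt h
          have heq : {z : κ.out → ℕ | ∀ i ∈ S, z i = x i}
              = ⋂ n, {z | z (r n) = x (r n)} := by
            ext z
            simp only [mem_setOf_eq, mem_iInter, hr, mem_range, forall_exists_index]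
            constructor
            · intro hz n
              exact hz (r n) n rfl
            · rintro hz i n rfl
              exact hz n
          rw [heq]
          exact hccV _ fun n => hx (r n)
      have hEV : E ∈ 𝒱 := by
        rw [h𝒱, Ultrafilter.mem_map]
        exact Filter.univ_mem' hgE
      have hx𝒱 : {x} ∈ 𝒱 := by
        refine Filter.mem_of_superset (Filter.inter_mem hbox hEV) ?_
        intro z hz
        exact hSprop z hz.2 hz.1
      exact hgfib x (by
        have := Ultrafilter.mem_map.mp (h𝒱 ▸ hx𝒱)
        simpa [Set.preimage, Set.mem_singleton_iff] using this)
    · push_neg at hP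
      obtain ⟨e₀, he₀⟩ := hEne
      have hW : {i | ∀ z ∈ E, z i = val z} ∈ 𝒰 := by
        by_contra hWn
        have hWc : {i | ∀ z ∈ E, z i = val z}ᶜ ∈ 𝒰 :=
          Ultrafilter.compl_mem_iff_notMem.mpr hWn
        set g : κ.out → (κ.out → ℕ) := fun i =>
          if h : ∃ z ∈ E, z i ≠ val z then h.choose else e₀ with hg
        have hgE : ∀ i, g i ∈ E := by
          intro i
          rw [hg]
          dsimp only
          by_cases h : ∃ z ∈ E, z i ≠ val z
          · rw [dif_pos h]; exact h.choose_spec.1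
          · rw [dif_neg h]; exact he₀
        obtain ⟨w, hwfib⟩ := hP g hgE
        have hint := Filter.inter_mem (Filter.inter_mem hwfib hWc) (hval w)
        obtain ⟨i, ⟨hiw, hic⟩, hiU⟩ := Ultrafilter.nonempty_of_mem hint
        have hex : ∃ z ∈ E, z i ≠ val z := by
          have : ¬ ∀ z ∈ E, z i = val z := hic
          push_neg at this
          exact this
        have hgi : g i = hex.choose := by rw [hg]; exact dif_pos hex
        have hne : w i ≠ val w := by
          have h1 : hex.choose i ≠ val hex.choose := hex.choose_spec.2
          have h2 : g i = w := hiw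
          rw [hgi] at h2
          rw [← h2]
          exact h1
        exact hne hiU
      have hWinf : {i | ∀ z ∈ E, z i = val z}.Infinite := by
        rw [← Set.infinite_coe_iff, Cardinal.infinite_iff, huniform _ hW]
        exact hκ
      obtain ⟨i₀, hi₀, i₁, hi₁, hne⟩ := hWinf.nontrivial
      have hVopen : IsOpen ((fun z : κ.out → ℕ => z i₀) ⁻¹' {0}
          ∩ (fun z : κ.out → ℕ => z i₁) ⁻¹' {1}) :=
        ((isOpen_discrete _).preimage (continuous_apply i₀)).inter
          ((isOpen_discrete _).preimage (continuous_apply i₁))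
      have hVne : ((fun z : κ.out → ℕ => z i₀) ⁻¹' {0}
          ∩ (fun z : κ.out → ℕ => z i₁) ⁻¹' {1}).Nonempty := by
        refine ⟨fun i => if i = i₁ then 1 else 0, ?_, ?_⟩
        · simp [hne]
        · simp
      obtain ⟨z, hzE, hz0, hz1⟩ := hdense.exists_mem_open hVopen hVne
      have h0 : z i₀ = val z := hi₀ z hzE
      have h1 : z i₁ = val z := hi₁ z hzE
      have hz0' : z i₀ = 0 := hz0
      have hz1' : z i₁ = 1 := hz1
      omega
end

section
/- Let X be a T₁ topological space and κ an infinite cardinal. If the product space X^κ contains a closed discrete subset of cardinality d(X^κ), then X^κ is e-separable. -/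
open Cardinal Set

universe u

/-
Write `Y = X^κ`. Since `κ` is infinite, `Y ≅ Y^ω`, so it suffices to show that `Y^ω` is
`e`-separable. Let `S ⊆ Y` be dense and `E ⊆ Y` closed discrete, both of size `d(Y)`. When `S` is
infinite there are `|S^{<ω}| = |S|` many points in `E`, so every finite tuple `t ∈ S^n` gets its own
tag `e_t ∈ E`. The points `(t₀, …, t_{n-1}, e_t, e_t, …)` with `t ∈ S^n` form a closed discrete
set `D_n`: their `n`-th coordinates are distinct points of `E`. Every point of the dense set `S^ω`
is the limit of its truncations, which lie in `⋃ D_n`. A finite dense set, on the other hand, is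
itself closed discrete.
-/

open Filter Topology

section ClosedDiscrete

variable {Y Z : Type u} [TopologicalSpace Y] [TopologicalSpace Z]

theorem closedDiscrete_iff_eventually_notMem {D : Set Y} :
    ClosedDiscrete D ↔ ∀ x, ∀ᶠ y in 𝓝[≠] x, y ∉ D := by
  simp only [ClosedDiscrete, ← isDiscrete_iff_discreteTopology, isClosed_and_discrete_iff,
    disjoint_principal_right]
  rfl

theorem Set.Finite.closedDiscrete [T1Space Y] {D : Set Y} (hD : D.Finite) : ClosedDiscrete D :=
  have := hD.to_subtype
  ⟨hD.isClosed, inferInstance⟩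

theorem ClosedDiscrete.of_mapsTo_injOn [T1Space Y] {π : Y → Z} (hπ : Continuous π) {E : Set Z}
    (hE : ClosedDiscrete E) {D : Set Y} (hDE : MapsTo π D E) (hinj : InjOn π D) :
    ClosedDiscrete D := by
  rw [closedDiscrete_iff_eventually_notMem] at hE ⊢
  intro x
  have hfiber : (D ∩ π ⁻¹' {π x}).Subsingleton := fun a ha b hb ↦
    hinj ha.1 hb.1 (ha.2.trans hb.2.symm)
  have hoff_fiber : ∀ᶠ y in 𝓝[≠] x, y ∉ D ∩ π ⁻¹' {π x} :=
    closedDiscrete_iff_eventually_notMem.mp hfiber.finite.closedDiscrete x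
  have hnear : ∀ᶠ y in 𝓝 x, π y ∈ E → π y = π x :=
    hπ.continuousAt.eventually <| (eventually_nhdsWithin_iff.mp (hE (π x))).mono
      fun z hz hzE ↦ not_not.mp fun hne ↦ hz hne hzE
  filter_upwards [hoff_fiber, nhdsWithin_le_nhds hnear] with y hy hyE hyD
  exact hy ⟨hyD, hyE (hDE hyD)⟩

end ClosedDiscrete

section ESeparable

variable {Y Z : Type u} [TopologicalSpace Y] [TopologicalSpace Z]

theorem ESeparable.of_dense_closedDiscrete {S : Set Y} (hS : Dense S) (hSd : ClosedDiscrete S) :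
    ESeparable Y :=
  ⟨fun _ ↦ S, fun _ ↦ hSd, by rwa [iUnion_const]⟩

theorem ClosedDiscrete.image_homeomorph (h : Y ≃ₜ Z) {D : Set Y} (hD : ClosedDiscrete D) :
    ClosedDiscrete (h '' D) :=
  have := hD.2
  ⟨h.isClosed_image.mpr hD.1,
    .of_continuous_injective (h.image D).symm.continuous (h.image D).symm.injective⟩

theorem ESeparable.of_homeomorph (h : Y ≃ₜ Z) (hY : ESeparable Y) : ESeparable Z := by
  obtain ⟨D, hD, hdense⟩ := hY
  refine ⟨fun n ↦ h '' D n, fun n ↦ (hD n).image_homeomorph h, ?_⟩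
  rw [← image_iUnion]
  exact h.surjective.denseRange.dense_image h.continuous hdense

end ESeparable

theorem exists_dense_mk_eq_density (Y : Type u) [TopologicalSpace Y] :
    ∃ S : Set Y, Dense S ∧ #S = density Y :=
  csInf_mem (s := {c | ∃ D : Set Y, Dense D ∧ #D = c}) ⟨_, univ, dense_univ, rfl⟩

theorem dense_iUnion_range_of_forall_apply_eq {Y : Type u} [TopologicalSpace Y] {S : Set Y}
    (hS : Dense S) (F : ∀ n, (Fin n → S) → ℕ → Y) (hF : ∀ n t (i : Fin n), F n t i = t i) :
    Dense (⋃ n, range (F n)) := by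
  have hpi : Set.pi univ (fun _ ↦ S) ⊆ closure (⋃ n, range (F n)) := by
    intro g hg
    have htendsto : Tendsto (fun n ↦ F n fun i ↦ ⟨g i, hg i trivial⟩) atTop (𝓝 g) :=
      tendsto_pi_nhds.mpr fun i ↦
        tendsto_atTop_of_eventually_const (i₀ := i + 1) fun n hn ↦ hF n _ ⟨i, hn⟩
    exact mem_closure_of_tendsto htendsto
      (Eventually.of_forall fun n ↦ mem_iUnion_of_mem n (mem_range_self _))
  exact dense_closure.mp ((dense_pi univ fun _ _ ↦ hS).mono hpi)

theorem eSeparable_pi_nat_of_mk_list_le {Y : Type u} [TopologicalSpace Y] [T1Space Y]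
    {S E : Set Y} (hS : Dense S) (hE : ClosedDiscrete E) (hSE : #(List S) ≤ #E) :
    ESeparable (ℕ → Y) := by
  obtain ⟨tag⟩ := hSE
  let x (n : ℕ) (t : Fin n → S) : ℕ → Y :=
    Function.extend Fin.val ((↑) ∘ t) fun _ ↦ (tag (List.ofFn t) : Y)
  have hx_tag (n : ℕ) (t : Fin n → S) : x n t n = tag (List.ofFn t) :=
    Function.extend_apply' _ _ _ fun ⟨i, hi⟩ ↦ i.isLt.ne hi
  refine ⟨fun n ↦ range (x n), fun n ↦ ?_,
    dense_iUnion_range_of_forall_apply_eq hS x fun n t ↦ Fin.val_injective.extend_apply _ _⟩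
  refine hE.of_mapsTo_injOn (continuous_apply n) ?_ ?_
  · rintro _ ⟨t, rfl⟩
    simp only [hx_tag, Subtype.coe_prop]
  · rintro _ ⟨t, rfl⟩ _ ⟨t', rfl⟩ h
    simp only [hx_tag, Subtype.coe_inj, tag.injective.eq_iff, List.ofFn_inj] at h
    rw [h]

theorem ESeparable.of_pi_nat {X ι : Type u} [TopologicalSpace X] [Infinite ι]
    (h : ESeparable (ℕ → ι → X)) : ESeparable (ι → X) := by
  have : #(ℕ × ι) = #ι := by
    rw [mk_prod, mk_nat, lift_aleph0, lift_uzero, aleph0_mul_eq (infinite_iff.mp ‹_›)]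
  obtain ⟨e⟩ := Cardinal.eq.mp this
  exact h.of_homeomorph <|
    Homeomorph.piCurry.symm.trans (Homeomorph.piCongrLeft (Y := fun _ ↦ X) e)

/-- If `X^κ` contains a closed discrete subset of cardinality `d(X^κ)` then `X^κ`
is `e`-separable. -/
theorem eSeparable_pow_of_closedDiscrete_density {X : Type u} [TopologicalSpace X] [T1Space X]
    (κ : Cardinal.{u}) (hκ : ℵ₀ ≤ κ)
    (h : ∃ D : Set (κ.out → X), ClosedDiscrete D ∧ #D = density (κ.out → X)) :
    ESeparable (κ.out → X) := by
  obtain ⟨E, hE, hEcard⟩ := h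
  obtain ⟨S, hS, hScard⟩ := exists_dense_mk_eq_density (κ.out → X)
  rcases finite_or_infinite S with _ | _
  · exact .of_dense_closedDiscrete hS (toFinite S).closedDiscrete
  · have : Infinite κ.out := infinite_iff.mpr (by rwa [mk_out])
    refine ESeparable.of_pi_nat (eSeparable_pi_nat_of_mk_list_le hS hE ?_)
    rw [mk_list_eq_mk, hScard, hEcard]
end

section
/- Suppose a T₁ topological space X can be written as X = D ∪ E where: (1) D is dense in X; (2) E is dense in X and is a union of countably many closed discrete subsets of X; (3) d(D) < d(E) (densities as subspaces); (4) e(D) is infinite and every subset A of D with |A| ≤ e(D) is nowhere dense in X. Then X is e-separable and d(X) < d_e(X). -/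
open Cardinal Set

universe u

/-- `d_e(X)`: the least cardinality of a dense subset of `X` that is a countable
union of closed discrete subsets of `X`. -/
noncomputable def densityE (X : Type u) [TopologicalSpace X] : Cardinal.{u} :=
  sInf {c | ∃ E : Set X, Dense E ∧
    (∃ F : ℕ → Set X, (∀ n, ClosedDiscrete (F n)) ∧ E = ⋃ n, F n) ∧ #E = c}

/-- If `X = D ∪ E` where `D` is dense, `E` is dense and σ-closed-discrete in `X`,
`d(D) < d(E)` and every subset of `D` of size at most `e(D)` is nowhere dense,
then `X` is `e`-separable and `d(X) < d_e(X)`. -/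
theorem eSeparable_and_density_lt_densityE {X : Type u} [TopologicalSpace X] [T1Space X]
    (D E : Set X) (hunion : D ∪ E = Set.univ)
    (hD : Dense D)
    (hE : Dense E)
    (hEσ : ∃ F : ℕ → Set X, (∀ n, ClosedDiscrete (F n)) ∧ E = ⋃ n, F n)
    (hdd : density ↥D < density ↥E)
    (heD : ℵ₀ ≤ extent ↥D)
    (hnwd : ∀ A : Set X, A ⊆ D → #A ≤ extent ↥D → IsNowhereDense A) :
    ESeparable X ∧ density X < densityE X := by
  obtain ⟨F, hF, hEF⟩ := hEσ
  refine ⟨⟨F, hF, hEF ▸ hE⟩, ?_⟩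
  -- d(X) ≤ d(D)
  have hXD : density X ≤ density ↥D := by
    obtain ⟨S, hSdense, hScard⟩ :=
      csInf_mem (s := {c | ∃ S : Set ↥D, Dense S ∧ #S = c})
        ⟨#(univ : Set ↥D), univ, dense_univ, rfl⟩
    have hdense : Dense ((↑) '' S : Set X) := by
      rw [dense_iff_closure_eq, ← univ_subset_iff, ← hD.closure_eq]
      refine (closure_minimal ?_ isClosed_closure)
      intro d hd
      have : (⟨d, hd⟩ : ↥D) ∈ closure S := hSdense _
      rwa [closure_subtype] at this
    calc density X ≤ #((↑) '' S : Set X) := csInf_le' ⟨_, hdense, rfl⟩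
      _ = #S := mk_image_eq Subtype.val_injective
      _ = density ↥D := hScard
  refine lt_of_le_of_lt hXD ?_
  -- witness for densityE
  obtain ⟨G, hGdense, ⟨F', hF', hGF'⟩, hGcard⟩ :=
    csInf_mem (s := {c | ∃ E' : Set X, Dense E' ∧
      (∃ F : ℕ → Set X, (∀ n, ClosedDiscrete (F n)) ∧ E' = ⋃ n, F n) ∧ #E' = c})
      ⟨#E, E, hE, ⟨F, hF, hEF⟩, rfl⟩
  -- each F' n ∩ D is small
  have hFn : ∀ n : ℕ, #(F' n ∩ D : Set X) ≤ extent ↥D := by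
    intro n
    set S : Set ↥D := Subtype.val ⁻¹' F' n with hS
    have hcl : IsClosed S := (hF' n).1.preimage continuous_subtype_val
    have hdisc : DiscreteTopology S := by
      have : DiscreteTopology (F' n) := (hF' n).2
      exact DiscreteTopology.preimage_of_continuous_injective (F' n)
        continuous_subtype_val Subtype.val_injective
    have him : Subtype.val '' S = F' n ∩ D := by
      ext x; simp [hS, and_comm]
    have hbdd : BddAbove {c | ∃ T : Set ↥D, ClosedDiscrete T ∧ #T = c} := by
      refine ⟨#↥D, fun c hc => ?_⟩
      obtain ⟨T, _, hT⟩ := hc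
      exact hT ▸ mk_set_le T
    calc #(F' n ∩ D : Set X) = #(Subtype.val '' S) := by rw [him]
      _ = #S := mk_image_eq Subtype.val_injective
      _ ≤ extent ↥D := le_csSup hbdd ⟨S, ⟨hcl, hdisc⟩, rfl⟩
  -- G ∩ D is small
  have hGD : #(G ∩ D : Set X) ≤ extent ↥D := by
    have hun : G ∩ D = ⋃ n : ULift.{u} ℕ, (F' n.down ∩ D) := by
      rw [hGF']; ext x; simp [iUnion_inter, ULift.exists]
    calc #(G ∩ D : Set X) = #(⋃ n : ULift.{u} ℕ, (F' n.down ∩ D)) := by rw [hun]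
      _ ≤ #(ULift.{u} ℕ) * ⨆ n : ULift.{u} ℕ, #(F' n.down ∩ D : Set X) :=
          mk_iUnion_le _
      _ ≤ ℵ₀ * extent ↥D := by
          refine mul_le_mul' (by simp) (ciSup_le' fun n => hFn n.down)
      _ = extent ↥D := aleph0_mul_eq heD
  have hnd : IsNowhereDense (G ∩ D) := hnwd _ inter_subset_right hGD
  -- G ∩ E is dense in X
  have hBdense : Dense (G ∩ E) := by
    rw [dense_iff_inter_open]
    intro U hU hUne
    have hV : IsOpen (U \ closure (G ∩ D)) := hU.sdiff isClosed_closure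
    have hVne : (U \ closure (G ∩ D)).Nonempty := by
      by_contra h
      rw [not_nonempty_iff_eq_empty, diff_eq_empty] at h
      have : U ⊆ interior (closure (G ∩ D)) := hU.subset_interior_iff.mpr h
      rw [hnd] at this
      exact hUne.ne_empty (subset_empty_iff.mp this)
    obtain ⟨x, hxV, hxG⟩ := (dense_iff_inter_open.mp hGdense) _ hV hVne
    have hxE : x ∈ E := by
      have : x ∈ D ∪ E := hunion ▸ mem_univ x
      rcases this with hxD | hxE
      · exact absurd (subset_closure (show x ∈ G ∩ D from ⟨hxG, hxD⟩)) hxV.2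
      · exact hxE
    exact ⟨x, hxV.1, hxG, hxE⟩
  -- hence dense in the subspace E, so d(E) ≤ #(G ∩ E)
  have hdE : density ↥E ≤ #(G ∩ E : Set X) := by
    set S : Set ↥E := Subtype.val ⁻¹' (G ∩ E) with hS
    have hSdense : Dense S := by
      intro x
      rw [closure_subtype]
      have him : Subtype.val '' S = G ∩ E := by
        ext y; simp [hS]; exact and_comm
      rw [him]
      exact hBdense _
    calc density ↥E ≤ #S := csInf_le' ⟨S, hSdense, rfl⟩
      _ = #(G ∩ E : Set X) := mk_preimage_of_injective_of_subset_range _ _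
          Subtype.val_injective (by rw [Subtype.range_val]; exact inter_subset_right)
  calc density ↥D < density ↥E := hdd
    _ ≤ #(G ∩ E : Set X) := hdE
    _ ≤ #G := mk_le_mk_of_subset inter_subset_left
    _ = densityE X := hGcard
end

section
/- Assume ℵ₁ < 2^ℵ₀. Then there is a d-separable topological space X with d(X) = ℵ₁ such that X contains no dense subset of cardinality ℵ₁ that is a union of countably many discrete subspaces; i.e., every σ-discrete dense subset of X has cardinality greater than ℵ₁. -/
/-!
Take `S` of size `ℵ₁` and `T = 2^ω`, and on `S ⊕ T × ω` let the nonempty open sets be the sets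
`U` whose complement meets `S` in a countable set and, above some level `n`, meets `T × ω` in at
most `ℵ₁` points. These sets form a filter, and in such a topology a nonempty discrete set has
open complement. Hence each level `T × {n}` is discrete, and since `ℵ₁ < 𝔠` no nonempty open set
avoids all levels, so their union is dense. A σ-discrete set meets `S` in a countable set, so if
it had size `ℵ₁` its complement would be a nonempty open set; thus small σ-discrete sets are not
dense, while `S` is dense and no countable set is, giving `d = ℵ₁`.
-/

open Cardinal Set

universe u

open Filter

section TopologyOfFilter

variable {X : Type u} {f : Filter X}

abbrev topologyOfFilter (f : Filter X) : TopologicalSpace X where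
  IsOpen U := U = ∅ ∨ U ∈ f
  isOpen_univ := Or.inr univ_mem
  isOpen_inter := by
    rintro U V (rfl | hU) (rfl | hV)
    · exact Or.inl (inter_self ∅)
    · exact Or.inl (empty_inter V)
    · exact Or.inl (inter_empty U)
    · exact Or.inr (inter_mem hU hV)
  isOpen_sUnion := by
    intro 𝒰 h𝒰
    by_cases h : ∃ U ∈ 𝒰, U ∈ f
    · obtain ⟨U, hU𝒰, hUf⟩ := h
      exact Or.inr (mem_of_superset hUf (subset_sUnion_of_mem hU𝒰))
    · push Not at h
      exact Or.inl (sUnion_eq_empty.2 fun U hU => (h𝒰 U hU).resolve_right (h U hU))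

variable [TopologicalSpace X]

theorem t1Space_of_isOpen_iff (hf : ∀ U, IsOpen U ↔ U = ∅ ∨ U ∈ f) (hcof : f ≤ cofinite) :
    T1Space X :=
  ⟨fun x => isOpen_compl_iff.1 <|
    (hf _).2 (Or.inr (le_cofinite_iff_compl_singleton_mem.1 hcof x))⟩

theorem dense_iff_compl_notMem_of_isOpen_iff (hf : ∀ U, IsOpen U ↔ U = ∅ ∨ U ∈ f) [f.NeBot]
    {D : Set X} : Dense D ↔ Dᶜ ∉ f := by
  rw [dense_iff_inter_open]
  constructor
  · intro hD hDc
    obtain ⟨x, hxc, hx⟩ := hD _ ((hf _).2 (Or.inr hDc)) (nonempty_of_mem hDc)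
    exact hxc hx
  · rintro hD U hU ⟨x, hx⟩
    rcases (hf U).1 hU with rfl | hUf
    · exact absurd hx (notMem_empty x)
    · exact frequently_iff.1 hD hUf

theorem compl_mem_of_discreteTopology (hf : ∀ U, IsOpen U ↔ U = ∅ ∨ U ∈ f)
    (hcof : f ≤ cofinite) {D : Set X} [DiscreteTopology D] (hD : D.Nonempty) : Dᶜ ∈ f := by
  obtain ⟨x, hx⟩ := hD
  obtain ⟨U, hU, hUD⟩ := isOpen_induced_iff.1 (isOpen_discrete {(⟨x, hx⟩ : D)})
  have hxU : x ∈ U := show (⟨x, hx⟩ : D) ∈ Subtype.val ⁻¹' U from hUD ▸ rfl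
  have hUf : U ∈ f := ((hf U).1 hU).resolve_left (nonempty_of_mem hxU).ne_empty
  refine mem_of_superset (inter_mem hUf (le_cofinite_iff_compl_singleton_mem.1 hcof x)) ?_
  rintro y ⟨hyU, hyx⟩ hyD
  have : (⟨y, hyD⟩ : D) ∈ Subtype.val ⁻¹' U := hyU
  rw [hUD] at this
  exact hyx (congrArg Subtype.val this)

theorem discreteTopology_of_compl_mem (hf : ∀ U, IsOpen U ↔ U = ∅ ∨ U ∈ f) {D : Set X}
    (hD : Dᶜ ∈ f) : DiscreteTopology D := by
  refine discreteTopology_iff_isOpen_singleton.2 fun ⟨x, hx⟩ => isOpen_induced_iff.2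
    ⟨insert x Dᶜ, (hf _).2 (Or.inr (mem_of_superset hD (subset_insert x _))), ?_⟩
  ext ⟨y, hy⟩
  simp [hy]

theorem aleph_one_le_mk_of_dense (hf : ∀ U, IsOpen U ↔ U = ∅ ∨ U ∈ f) [f.NeBot]
    (hcoc : f ≤ cocountable) {E : Set X} (hE : Dense E) : ℵ₁ ≤ #E := by
  by_contra! hE_lt
  refine (dense_iff_compl_notMem_of_isOpen_iff hf).1 hE (hcoc (mem_cocountable.2 ?_))
  rw [compl_compl]
  exact le_aleph0_iff_set_countable.1 (lt_aleph_one_iff.1 hE_lt)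

theorem density_eq_of_dense {κ : Cardinal.{u}} {D : Set X} (hD : Dense D) (hDκ : #D = κ)
    (hmin : ∀ E : Set X, Dense E → κ ≤ #E) : density X = κ :=
  le_antisymm (csInf_le' ⟨D, hD, hDκ⟩) <|
    le_csInf ⟨κ, D, hD, hDκ⟩ fun _ ⟨E, hE, hEc⟩ => hEc ▸ hmin E hE

end TopologyOfFilter

theorem cocardinal_le_cocardinal {α : Type u} {c d : Cardinal.{u}} (hc : c.IsRegular)
    (hd : d.IsRegular) (hcd : c ≤ d) : cocardinal α hd ≤ cocardinal α hc :=
  fun _ hU => mem_cocardinal.2 ((mem_cocardinal.1 hU).trans_le hcd)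

theorem cocountable_le_cofinite {α : Type u} : (cocountable : Filter α) ≤ cofinite :=
  cocardinal_aleph0_eq_cofinite ▸ cocardinal_le_cocardinal _ _ (aleph0_le_aleph 1)

instance cocountable_neBot {α : Type u} [Uncountable α] : (cocountable : Filter α).NeBot :=
  ⟨fun h => not_countable_univ (by simpa using mem_cocountable.1 (h ▸ mem_bot : ∅ ∈ _))⟩

section Counterexample

variable (S T : Type u)

-- `cocardinal _ (succ ℵ₁)`: the sets whose complement has at most `ℵ₁` points.
noncomputable def levelFilter : Filter (T × ℕ) :=
  cocardinal (T × ℕ) (isRegular_succ (aleph0_le_aleph 1)) ⊓ comap Prod.snd atTop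

noncomputable def counterexampleFilter : Filter (S ⊕ T × ℕ) :=
  map Sum.inl cocountable ⊔ map Sum.inr (levelFilter T)

variable {S T}

theorem levelFilter_le_cocountable : levelFilter T ≤ cocountable :=
  inf_le_left.trans (cocardinal_le_cocardinal _ _ (Order.le_succ _))

theorem compl_mem_levelFilter {A : Set (T × ℕ)} (hA : #A ≤ ℵ₁) : Aᶜ ∈ levelFilter T :=
  mem_inf_of_left (compl_mem_cocardinal_of_card_lt (Order.lt_succ_iff.2 hA))

theorem exists_prodMk_mem_of_mem_cocardinal (hT : ℵ₁ < #T) {U : Set (T × ℕ)}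
    (hU : U ∈ cocardinal (T × ℕ) (isRegular_succ (aleph0_le_aleph 1))) (n : ℕ) :
    ∃ b, (b, n) ∈ U := by
  by_contra! h
  have : #T ≤ #(Uᶜ : Set (T × ℕ)) :=
    mk_le_of_injective (f := fun b => ⟨(b, n), h b⟩) fun a b hab => by simpa using hab
  exact (hT.trans_le this).not_ge (Order.lt_succ_iff.1 (mem_cocardinal.1 hU))

theorem levelFilter_neBot (hT : ℵ₁ < #T) : (levelFilter T).NeBot := by
  refine inf_neBot_iff.2 fun U hU V hV => ?_
  obtain ⟨W, hW, hWV⟩ := mem_comap.1 hV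
  obtain ⟨n, hn⟩ := mem_atTop_sets.1 hW
  obtain ⟨b, hb⟩ := exists_prodMk_mem_of_mem_cocardinal hT hU n
  exact ⟨(b, n), hb, hWV (hn n le_rfl)⟩

theorem counterexampleFilter_le_cocountable : counterexampleFilter S T ≤ cocountable := by
  intro U hU
  have hUc : (Uᶜ).Countable := mem_cocountable.1 hU
  exact ⟨mem_cocountable.2 (hUc.preimage Sum.inl_injective),
    levelFilter_le_cocountable (mem_cocountable.2 (hUc.preimage Sum.inr_injective))⟩

instance counterexampleFilter_neBot [Uncountable S] : (counterexampleFilter S T).NeBot :=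
  (map_neBot (m := Sum.inl)).mono le_sup_left

theorem countable_preimage_inl_of_compl_mem {D : Set (S ⊕ T × ℕ)}
    (hD : Dᶜ ∈ counterexampleFilter S T) : (Sum.inl ⁻¹' D).Countable := by
  simpa using mem_cocountable.1 hD.1

theorem aleph_one_lt_mk_of_compl_notMem {E : Set (S ⊕ T × ℕ)}
    (hE : Eᶜ ∉ counterexampleFilter S T) (hS : (Sum.inl ⁻¹' E).Countable) : ℵ₁ < #E := by
  by_contra! hEc
  refine hE ⟨mem_cocountable.2 (by simpa using hS), ?_⟩
  simpa using compl_mem_levelFilter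
    ((mk_preimage_of_injective Sum.inr E Sum.inr_injective).trans hEc)

theorem compl_range_level_mem (n : ℕ) :
    (range fun b : T => (Sum.inr (b, n) : S ⊕ T × ℕ))ᶜ ∈ counterexampleFilter S T := by
  refine ⟨by simp, mem_inf_of_right (mem_comap.2 ⟨Ici (n + 1), Ici_mem_atTop _, ?_⟩)⟩
  rintro ⟨b, m⟩ hm ⟨b', hb'⟩
  simp only [mem_preimage, mem_Ici, Sum.inr.injEq, Prod.mk.injEq] at hm hb'
  omega

theorem compl_iUnion_range_level_notMem (hT : ℵ₁ < #T) :
    (⋃ n, range fun b : T => (Sum.inr (b, n) : S ⊕ T × ℕ))ᶜ ∉ counterexampleFilter S T := by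
  intro h
  have := levelFilter_neBot hT
  refine (levelFilter T).empty_notMem (mem_of_superset h.2 ?_)
  rintro ⟨b, n⟩ hbn
  exact hbn (mem_iUnion.2 ⟨n, b, rfl⟩)

theorem compl_range_inl_notMem [Uncountable S] :
    (range (Sum.inl : S → S ⊕ T × ℕ))ᶜ ∉ counterexampleFilter S T := by
  intro h
  exact (cocountable : Filter S).empty_notMem (by simpa using h.1)

end Counterexample

/-- Assuming `ℵ₁ < 𝔠`, there is a `d`-separable `T₁` space `X` with `d(X) = ℵ₁`
such that every σ-discrete dense subset of `X` has cardinality greater than `ℵ₁`. -/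
theorem exists_dSeparable_no_small_sigmaDiscrete_dense
    (h : (aleph 1 : Cardinal.{0}) < 2 ^ ℵ₀) :
    ∃ (X : Type) (_ : TopologicalSpace X), T1Space X ∧
      (∃ D : ℕ → Set X, (∀ n, DiscreteTopology ↥(D n)) ∧ Dense (⋃ n, D n)) ∧
      density X = aleph 1 ∧
      ∀ E : Set X, Dense E →
        (∃ F : ℕ → Set X, (∀ n, DiscreteTopology ↥(F n)) ∧ E = ⋃ n, F n) →
        aleph 1 < #E := by
  obtain ⟨S, hS⟩ : ∃ S : Type, #S = aleph 1 := ⟨_, mk_out _⟩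
  have : Uncountable S :=
    ⟨fun hc => (aleph0_lt_aleph_one.trans_eq hS.symm).not_ge (mk_le_aleph0_iff.2 hc)⟩
  have hT : aleph 1 < #(ℕ → Bool) := by simpa using h
  let f := counterexampleFilter S (ℕ → Bool)
  let τ : TopologicalSpace (S ⊕ (ℕ → Bool) × ℕ) := topologyOfFilter f
  have hf : ∀ U, IsOpen U ↔ U = ∅ ∨ U ∈ f := fun _ => Iff.rfl
  have hcoc : f ≤ cocountable := counterexampleFilter_le_cocountable
  have hcof : f ≤ cofinite := hcoc.trans cocountable_le_cofinite
  have hdense {E : Set (S ⊕ (ℕ → Bool) × ℕ)} : Dense E ↔ Eᶜ ∉ f :=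
    dense_iff_compl_notMem_of_isOpen_iff hf
  refine ⟨_, τ, t1Space_of_isOpen_iff hf hcof,
    ⟨_, fun n => discreteTopology_of_compl_mem hf (compl_range_level_mem n),
      hdense.2 (compl_iUnion_range_level_notMem hT)⟩,
    density_eq_of_dense (hdense.2 compl_range_inl_notMem)
      (by rw [mk_range_eq _ Sum.inl_injective, hS]) fun _ => aleph_one_le_mk_of_dense hf hcoc,
    ?_⟩
  rintro E hE ⟨F, hF, rfl⟩
  refine aleph_one_lt_mk_of_compl_notMem (hdense.1 hE) ?_
  rw [preimage_iUnion]
  refine countable_iUnion fun n => (F n).eq_empty_or_nonempty.elim (fun hn => by simp [hn]) ?_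
  have := hF n
  exact fun hn => countable_preimage_inl_of_compl_mem (compl_mem_of_discreteTopology hf hcof hn)
end

section
/- Let X be an e-separable topological space and κ ≤ 2^ℵ₀ a cardinal. Then the product space X^κ is e-separable. -/
open Cardinal Set

universe u

/-!
Embed `κ` into the Cantor space `ℕ → Bool` by `e`. For `N : ℕ` and `c : (Fin N → Bool) → ℕ`,
the functions `f : κ → X` that depend only on the first `N` bits of `e a` and take values in
`D (c r)` on the cell with prefix `r` form a closed discrete set: they are pinned down by
finitely many coordinates, each ranging over a closed discrete set. There are countably many
pairs `(N, c)`, and the union of these sets is dense, because a basic open set of `X^κ`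
constrains finitely many coordinates, and for large `N` their prefixes are pairwise distinct.
-/

open Filter Topology Function

section

variable {X : Type*} [TopologicalSpace X]

theorem closedDiscrete_iff_eventually {D : Set X} :
    ClosedDiscrete D ↔ ∀ x, ∀ᶠ y in 𝓝 x, y ∈ D → y = x := by
  rw [ClosedDiscrete, ← isDiscrete_iff_discreteTopology, isClosed_and_discrete_iff]
  refine forall_congr' fun x => ?_
  rw [disjoint_principal_right, ← eventually_mem_set, eventually_nhdsWithin_iff]
  refine eventually_congr (Eventually.of_forall fun y => ?_)
  simp only [mem_compl_iff, mem_singleton_iff]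
  tauto

theorem closedDiscrete_factorsThrough_inter_pi {ι R : Type*} [Finite R] (p : ι → R)
    {E : ι → Set X} (hE : ∀ a, ClosedDiscrete (E a)) :
    ClosedDiscrete ({f : ι → X | FactorsThrough f p} ∩ univ.pi E) := by
  simp only [closedDiscrete_iff_eventually] at hE ⊢
  intro g
  have hcoord : ∀ a, ∀ᶠ f in 𝓝 g, f a ∈ E a → f a = g a := fun a =>
    ((continuous_apply a).tendsto g).eventually (hE a (g a))
  by_cases hg : FactorsThrough g p
  · have hfiber : ∀ r, ∀ᶠ f in 𝓝 g, ∀ a, p a = r →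
        f ∈ {f : ι → X | FactorsThrough f p} ∩ univ.pi E → f a = g a := by
      intro r
      by_cases hr : ∃ b, p b = r
      · obtain ⟨b, rfl⟩ := hr
        filter_upwards [hcoord b] with f hf a ha ⟨hfp, hfE⟩
        rw [hfp ha, hf (hfE b trivial), hg ha.symm]
      · exact Eventually.of_forall fun f a ha => absurd ⟨a, ha⟩ hr
    filter_upwards [eventually_all.2 hfiber] with f hf hfS
    exact funext fun a => hf (p a) a rfl hfS
  · obtain ⟨a, b, hab, hne⟩ : ∃ a b, p a = p b ∧ g a ≠ g b := by
      simpa [FactorsThrough] using hg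
    filter_upwards [hcoord a, hcoord b] with f ha hb ⟨hfp, hfE⟩
    exact absurd ((ha (hfE a trivial)).symm.trans ((hfp hab).trans (hb (hfE b trivial)))) hne

theorem eventually_injOn_truncate {ι β : Type*} {e : ι → ℕ → β} (he : Injective e)
    (I : Finset ι) : ∀ᶠ N in atTop, InjOn (fun a (i : Fin N) => e a i) I := by
  have hpair : ∀ a ∈ I, ∀ b ∈ I, ∀ᶠ N in atTop,
      (fun i : Fin N => e a i) = (fun i : Fin N => e b i) → a = b := by
    intro a _ b _
    by_cases hab : a = b
    · exact Eventually.of_forall fun _ _ => hab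
    obtain ⟨n, hn⟩ := ne_iff.1 (he.ne hab)
    filter_upwards [eventually_gt_atTop n] with N hN h
    exact absurd (congrFun h ⟨n, hN⟩) hn
  filter_upwards [(eventually_all_finset I).2 fun a ha => (eventually_all_finset I).2 (hpair a ha)]
    with N hN a ha b hb
  exact hN a ha b hb

theorem dense_iUnion_factorsThrough_inter_pi {ι J : Type*} {R : J → Type*}
    (p : ∀ j, ι → R j) (hp : ∀ I : Finset ι, ∃ j, InjOn (p j) I) {D : ℕ → Set X}
    (hD : Dense (⋃ n, D n)) :
    Dense (⋃ q : Σ j, R j → ℕ,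
      {f : ι → X | FactorsThrough f (p q.1)} ∩ univ.pi fun a => D (q.2 (p q.1 a))) := by
  rw [dense_iff_inter_open]
  rintro O hO ⟨x, hx⟩
  obtain ⟨I, u, hu, hIO⟩ := isOpen_pi_iff.1 hO x hx
  obtain ⟨j, hj⟩ := hp I
  obtain hι | hι := isEmpty_or_nonempty ι
  · exact ⟨x, hx, mem_iUnion.2 ⟨⟨j, fun _ => 0⟩, fun a => isEmptyElim a, fun a => isEmptyElim a⟩⟩
  have : Nonempty X := ⟨x hι.some⟩
  have hfiber : ∀ r, ∃ m, ∃ y ∈ D m, ∀ a ∈ I, p j a = r → y ∈ u a := by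
    intro r
    by_cases hr : ∃ a ∈ I, p j a = r
    · obtain ⟨a, ha, rfl⟩ := hr
      obtain ⟨y, hyu, hyD⟩ := hD.inter_open_nonempty (u a) (hu a ha).1 ⟨x a, (hu a ha).2⟩
      obtain ⟨m, hm⟩ := mem_iUnion.1 hyD
      exact ⟨m, y, hm, fun b hb hba => hj hb ha hba ▸ hyu⟩
    · obtain ⟨y, hy⟩ := hD.nonempty
      obtain ⟨m, hm⟩ := mem_iUnion.1 hy
      exact ⟨m, y, hm, fun a ha har => absurd ⟨a, ha, har⟩ hr⟩
  choose m y hyD hyu using hfiber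
  refine ⟨y ∘ p j, hIO fun a ha => hyu _ a ha rfl, mem_iUnion.2 ⟨⟨j, m⟩, ?_, fun a _ => hyD _⟩⟩
  intro a b hab
  simp only [comp_apply, hab]

theorem ESeparable.of_countable {J : Type*} [Countable J] {S : J → Set X}
    (hS : ∀ j, ClosedDiscrete (S j)) (hdense : Dense (⋃ j, S j)) : ESeparable X := by
  obtain hJ | hJ := isEmpty_or_nonempty J
  · exact ⟨fun _ => ∅, fun _ => ⟨isClosed_empty, subsingleton_empty.isDiscrete.to_subtype⟩,
      by simpa using hdense⟩
  obtain ⟨g, hg⟩ := exists_surjective_nat J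
  exact ⟨fun n => S (g n), fun n => hS (g n), by rwa [hg.iUnion_comp]⟩

end

theorem eSeparable_pow_le_continuum_general {X : Type u} [TopologicalSpace X]
    (hX : ESeparable X) (κ : Cardinal.{u}) (hκ : κ ≤ 2 ^ ℵ₀) :
    ESeparable (κ.out → X) := by
  obtain ⟨D, hD, hdense⟩ := hX
  obtain ⟨e⟩ : Nonempty (κ.out ↪ (ℕ → Bool)) :=
    Cardinal.lift_mk_le'.1 (by simpa [mk_arrow] using hκ)
  exact ESeparable.of_countable
    (fun _ => closedDiscrete_factorsThrough_inter_pi _ fun _ => hD _)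
    (dense_iUnion_factorsThrough_inter_pi (fun N a (i : Fin N) => e a i)
      (fun I => (eventually_injOn_truncate e.injective I).exists) hdense)

/-- If `X` is `e`-separable and `κ ≤ 𝔠` then `X^κ` is `e`-separable. -/
theorem eSeparable_pow_le_continuum {X : Type u} [TopologicalSpace X] [T1Space X]
    (hX : ESeparable X) (κ : Cardinal.{u}) (hκ : κ ≤ 2 ^ ℵ₀) :
    ESeparable (κ.out → X) :=
  eSeparable_pow_le_continuum_general hX κ hκ
end

section
/- Let λ ≤ 2^ℵ₀ be an uncountable regular cardinal and let (X_α)_{α<λ} be nonempty discrete topological spaces with |X_α| < λ for each α < λ and sup_{α<λ} |X_α| = λ. If the product space ∏_{α<λ} X_α contains no closed discrete subset of cardinality λ, then ∏_{α<λ} X_α is not e-separable. -/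
open Cardinal Set

universe u

/-!
A dense subset of `∏ X_α` projects onto every (discrete) factor, so it has at least
`sup |X_α| = λ` points. As `λ` is regular and uncountable, one of the countably many closed
discrete pieces of a witness of `e`-separability already has `λ` points, and any `λ`-sized
subset of it is again closed discrete.
-/

theorem ClosedDiscrete.mono {X : Type u} [TopologicalSpace X] {D S : Set X}
    (hD : ClosedDiscrete D) (hSD : S ⊆ D) : ClosedDiscrete S := by
  rw [ClosedDiscrete, ← isDiscrete_iff_discreteTopology, isClosed_and_discrete_iff] at hD ⊢
  exact fun x => (hD x).mono_right (Filter.principal_mono.2 hSD)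

theorem Dense.mk_le_of_surjective {X Y : Type u} [TopologicalSpace X] [TopologicalSpace Y]
    [DiscreteTopology Y] {f : X → Y} (hf : Continuous f) (hsurj : Function.Surjective f)
    {U : Set X} (hU : Dense U) : #Y ≤ #U := by
  have himage : f '' U = Set.univ := dense_discrete.1 (hsurj.denseRange.dense_image hf hU)
  calc #Y = #(f '' U) := by rw [himage, Cardinal.mk_univ]
    _ ≤ #U := mk_image_le

theorem Cardinal.exists_le_mk_of_le_mk_iUnion {α ι : Type*} [Countable ι] {c : Cardinal}
    (hc : c.IsRegular) (hc₀ : ℵ₀ < c) {f : ι → Set α} (h : c ≤ #(⋃ i, f i)) :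
    ∃ i, c ≤ #(f i) := by
  by_contra! hsmall
  have hrange : #(range f) < c := (countable_range f).le_aleph0.trans_lt hc₀
  have hsup : ⨆ s : range f, #s < c :=
    iSup_lt_of_lt_cof_ord (by rwa [hc.cof_ord]) (by rintro ⟨_, i, rfl⟩; exact hsmall i)
  refine h.not_gt ?_
  rw [← sUnion_range]
  exact (mk_sUnion_le _).trans_lt (mul_lt_of_lt hc.aleph0_le hrange hsup)

theorem not_eSeparable_of_no_large_closedDiscrete_general (L : Cardinal.{u})
    (hreg : L.IsRegular) (hunc : ℵ₀ < L)
    (X : L.out → Type u) [∀ a, TopologicalSpace (X a)] [∀ a, DiscreteTopology (X a)]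
    [∀ a, Nonempty (X a)]
    (hsup : (⨆ a, #(X a)) = L)
    (hncd : ¬ ∃ D : Set (∀ a, X a), ClosedDiscrete D ∧ #D = L) :
    ¬ ESeparable (∀ a, X a) := by
  rintro ⟨D, hcd, hdense⟩
  have hL : L ≤ #(⋃ n, D n) :=
    hsup.ge.trans <| ciSup_le' fun a =>
      hdense.mk_le_of_surjective (continuous_apply a) (Function.surjective_eval a)
  obtain ⟨n, hn⟩ := exists_le_mk_of_le_mk_iUnion hreg hunc hL
  obtain ⟨S, hSD, hS⟩ := le_mk_iff_exists_subset.1 hn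
  exact hncd ⟨S, (hcd n).mono hSD, hS⟩

/-- If `λ ≤ 𝔠` is an uncountable regular cardinal and `(X_α)_{α<λ}` are nonempty
discrete spaces of size `< λ` with supremum of sizes equal to `λ`, and the product
has no closed discrete subset of cardinality `λ`, then the product is not
`e`-separable. -/
theorem not_eSeparable_of_no_large_closedDiscrete (L : Cardinal.{u}) (hL : L ≤ 2 ^ ℵ₀)
    (hreg : L.IsRegular) (hunc : ℵ₀ < L)
    (X : L.out → Type u) [∀ a, TopologicalSpace (X a)] [∀ a, DiscreteTopology (X a)]
    [∀ a, Nonempty (X a)]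
    (hsmall : ∀ a, #(X a) < L) (hsup : (⨆ a, #(X a)) = L)
    (hncd : ¬ ∃ D : Set (∀ a, X a), ClosedDiscrete D ∧ #D = L) :
    ¬ ESeparable (∀ a, X a) :=
  not_eSeparable_of_no_large_closedDiscrete_general L hreg hunc X hsup hncd
end

section
/- Let κ ≤ 2^ℵ₀ be a cardinal. Then the following are equivalent: (a) for every index set I with |I| ≤ κ and every family (X_i)_{i∈I} of e-separable topological spaces, the product ∏_{i∈I} X_i is e-separable; (b) for every index set I with |I| ≤ κ and every family (X_i)_{i∈I} of discrete spaces, the product ∏_{i∈I} X_i is e-separable. -/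
open Cardinal Set

universe u

/-!
Discrete factors are `e`-separable, so (a) gives (b). Conversely, let the dense set of each `X i`
be `⋃ n, D i n` with every `D i n` closed discrete and nonempty. As `#ι ≤ 𝔠`, the space `ℕ^ι` is
separable; for a dense sequence `σ` in it the boxes `∏ i, D i (σ k i)` have dense union. Each box
is a closed copy of a product of discrete spaces, hence `e`-separable by (b), and the images of its
closed discrete sets stay closed discrete in `∏ i, X i`. Countably many of them are dense.
-/

open TopologicalSpace Topology Filter

section ClosedDiscrete

variable {X Y : Type*} [TopologicalSpace X] [TopologicalSpace Y]

theorem closedDiscrete_iff_forall_subset_isClosed {D : Set X} :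
    ClosedDiscrete D ↔ ∀ S ⊆ D, IsClosed S := by
  constructor
  · rintro ⟨hD, _⟩ S hS
    simpa [inter_eq_right.2 hS] using
      hD.isClosedEmbedding_subtypeVal.isClosedMap _ (isClosed_discrete ((↑) ⁻¹' S : Set D))
  · intro h
    refine ⟨h D subset_rfl, discreteTopology_iff_forall_isClosed.2 fun s => ?_⟩
    have hs : IsClosed (((↑) : D → X) '' s) := h _ (image_subset_iff.2 fun x _ => x.2)
    rw [← preimage_image_eq s Subtype.val_injective]
    exact hs.preimage continuous_subtype_val

theorem ClosedDiscrete.image {f : X → Y} (hf : IsClosedMap f) {D : Set X}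
    (hD : ClosedDiscrete D) : ClosedDiscrete (f '' D) := by
  refine closedDiscrete_iff_forall_subset_isClosed.2 fun S hS => ?_
  rw [← inter_eq_left.2 hS, ← image_preimage_inter]
  exact hf _ (closedDiscrete_iff_forall_subset_isClosed.1 hD _ inter_subset_right)

theorem closedDiscrete_univ [DiscreteTopology X] : ClosedDiscrete (univ : Set X) :=
  ⟨isClosed_univ, inferInstance⟩

end ClosedDiscrete

namespace ESeparable

variable {X Y : Type*} [TopologicalSpace X] [TopologicalSpace Y]

theorem of_discreteTopology [DiscreteTopology X] : ESeparable X :=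
  ⟨fun _ => univ, fun _ => closedDiscrete_univ, by simp only [iUnion_const, dense_univ]⟩

theorem of_dense_iUnion₂ (E : ℕ → ℕ → Set X) (hE : ∀ k m, ClosedDiscrete (E k m))
    (hdense : Dense (⋃ (k) (m), E k m)) : ESeparable X :=
  ⟨fun n => E n.unpair.1 n.unpair.2, fun _ => hE _ _, by rwa [iUnion_unpair]⟩

theorem exists_nonempty_closedDiscrete [Nonempty X] (h : ESeparable X) :
    ∃ D : ℕ → Set X, (∀ n, ClosedDiscrete (D n)) ∧ (∀ n, (D n).Nonempty) ∧
      Dense (⋃ n, D n) := by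
  obtain ⟨D, hD, hdense⟩ := h
  obtain ⟨m, hm⟩ : ∃ m, (D m).Nonempty := nonempty_iUnion.1 hdense.nonempty
  classical
  let g n := if (D n).Nonempty then n else m
  refine ⟨D ∘ g, fun _ => hD _, fun n => ?_, hdense.mono (iUnion_subset fun n x hx => ?_)⟩
  · by_cases hn : (D n).Nonempty <;> simp [g, hn, hm]
  · exact mem_iUnion.2 ⟨n, by simpa [g, show (D n).Nonempty from ⟨x, hx⟩] using hx⟩

theorem exists_closedDiscrete_range_subset_closure {f : X → Y} (hf : Continuous f)
    (hf' : IsClosedMap f) (h : ESeparable X) :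
    ∃ E : ℕ → Set Y, (∀ n, ClosedDiscrete (E n)) ∧ range f ⊆ closure (⋃ n, E n) := by
  obtain ⟨D, hD, hdense⟩ := h
  refine ⟨fun n => f '' D n, fun n => (hD n).image hf', ?_⟩
  rw [← image_univ, ← hdense.closure_eq, ← image_iUnion]
  exact image_closure_subset_closure_image hf

theorem exists_closedDiscrete_pi_subset_closure {ι : Type*} {X : ι → Type*}
    [∀ i, TopologicalSpace (X i)] {D : ∀ i, Set (X i)} (hD : ∀ i, IsClosed (D i))
    (h : ESeparable (∀ i, D i)) :
    ∃ E : ℕ → Set (∀ i, X i), (∀ n, ClosedDiscrete (E n)) ∧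
      pi univ D ⊆ closure (⋃ n, E n) := by
  have hemb : IsClosedEmbedding (Pi.map fun i => ((↑) : D i → X i)) :=
    .piMap fun i => (hD i).isClosedEmbedding_subtypeVal
  simpa [range_piMap] using h.exists_closedDiscrete_range_subset_closure hemb.continuous
    hemb.isClosedMap

end ESeparable

theorem Function.Injective.exists_injOn_restrict_fin {ι α : Type*} {e : ι → ℕ → α}
    (he : Function.Injective e) (S : Finset ι) :
    ∃ n, InjOn (fun i (m : Fin n) => e i m) S := by
  have hsep : ∀ᶠ n in atTop, ∀ p ∈ S ×ˢ S, p.1 ≠ p.2 →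
      (fun m : Fin n => e p.1 m) ≠ fun m : Fin n => e p.2 m := by
    refine (eventually_all_finset _).2 fun p _ => ?_
    by_cases hp : p.1 = p.2
    · exact .of_forall fun _ h => absurd hp h
    obtain ⟨m, hm⟩ := Function.ne_iff.1 (he.ne hp)
    filter_upwards [eventually_gt_atTop m] with n hn _ h
    exact hm (congrFun h ⟨m, hn⟩)
  obtain ⟨n, hn⟩ := hsep.exists
  exact ⟨n, fun i hi j hj hij => by_contra fun h => hn (i, j) (Finset.mk_mem_product hi hj) h hij⟩

theorem separableSpace_pi_of_mk_le_continuum {ι : Type u} {Y : Type*} [TopologicalSpace Y]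
    [Countable Y] [Nonempty Y] (hι : #ι ≤ 𝔠) : SeparableSpace (ι → Y) := by
  obtain ⟨e⟩ : Nonempty (ι ↪ (ℕ → Bool)) := by
    rw [← lift_mk_le']
    simpa using hι
  -- `Φ ⟨n, v⟩ i` only sees the first `n` bits of `e i`, which separate a given finite set for
  -- large `n`.
  let Φ : (Σ n, (Fin n → Bool) → Y) → ι → Y := fun v i => v.2 fun m => e i m
  refine ⟨range Φ, countable_range Φ, dense_iff_inter_open.2 fun U hU ⟨p, hp⟩ => ?_⟩
  obtain ⟨S, u, hu, hSU⟩ := isOpen_pi_iff.1 hU p hp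
  obtain ⟨n, hn⟩ := e.injective.exists_injOn_restrict_fin S
  let v := Function.extend (fun (i : (S : Set ι)) (m : Fin n) => e i m) (fun i => p i)
    fun _ => Classical.arbitrary Y
  refine ⟨Φ ⟨n, v⟩, hSU fun i hi => ?_, mem_range_self _⟩
  have : Φ ⟨n, v⟩ i = p i :=
    hn.injective.extend_apply (fun i => p i) (fun _ => Classical.arbitrary Y) ⟨i, hi⟩
  exact this ▸ (hu i hi).2

theorem dense_iUnion_pi_of_denseRange {ι K : Type*} {X : ι → Type*} [∀ i, TopologicalSpace (X i)]
    {D : ∀ i, ℕ → Set (X i)} (hne : ∀ i n, (D i n).Nonempty) (hD : ∀ i, Dense (⋃ n, D i n))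
    {σ : K → ι → ℕ} (hσ : DenseRange σ) : Dense (⋃ k, pi univ fun i => D i (σ k i)) := by
  classical
  refine dense_iff_inter_open.2 fun U hU ⟨x, hx⟩ => ?_
  obtain ⟨S, u, hu, hSU⟩ := isOpen_pi_iff.1 hU x hx
  have hmeet (i : S) : ∃ n, (u i ∩ D i n).Nonempty := by
    obtain ⟨y, hyu, hyD⟩ := (hD i).inter_open_nonempty _ (hu i i.2).1 ⟨x i, (hu i i.2).2⟩
    obtain ⟨n, hn⟩ := mem_iUnion.1 hyD
    exact ⟨n, y, hyu, hn⟩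
  choose n y hy using hmeet
  have hopen : IsOpen ((fun s : ι → ℕ => fun i : S => s i) ⁻¹' {n}) :=
    (isOpen_discrete _).preimage (by fun_prop)
  obtain ⟨k, hk : (fun i : S => σ k i) = n⟩ :=
    hσ.exists_mem_open hopen ⟨fun i => if h : i ∈ S then n ⟨i, h⟩ else 0, by ext; simp⟩
  let z i := if h : i ∈ S then y ⟨i, h⟩ else (hne i (σ k i)).some
  refine ⟨z, hSU fun i hi => ?_, mem_iUnion.2 ⟨k, fun i _ => ?_⟩⟩
  · simpa [z, Finset.mem_coe.1 hi] using (hy ⟨i, hi⟩).1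
  · by_cases hi : i ∈ S
    · simpa [z, hi, ← congrFun hk ⟨i, hi⟩] using (hy ⟨i, hi⟩).2
    · simpa [z, hi] using (hne i (σ k i)).some_mem

theorem ESeparable.pi {ι : Type u} {X : ι → Type*} [∀ i, TopologicalSpace (X i)] (hι : #ι ≤ 𝔠)
    (hX : ∀ i, ESeparable (X i))
    (hdiscrete : ∀ D : ∀ i, Set (X i), (∀ i, ClosedDiscrete (D i)) → ESeparable (∀ i, D i)) :
    ESeparable (∀ i, X i) := by
  rcases isEmpty_or_nonempty (∀ i, X i) with _ | hne
  · exact .of_discreteTopology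
  have := Classical.nonempty_pi.1 hne
  choose D hD hD_ne hD_dense using fun i => (hX i).exists_nonempty_closedDiscrete
  have := separableSpace_pi_of_mk_le_continuum (Y := ℕ) hι
  obtain ⟨σ, hσ⟩ := exists_dense_seq (ι → ℕ)
  choose E hE hE_cover using fun k =>
    ESeparable.exists_closedDiscrete_pi_subset_closure (fun i => (hD i (σ k i)).1)
      (hdiscrete _ fun i => hD i (σ k i))
  have hboxes := dense_iUnion_pi_of_denseRange hD_ne hD_dense hσ
  refine .of_dense_iUnion₂ E hE (dense_closure.1 (hboxes.mono (iUnion_subset fun k => ?_)))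
  exact (hE_cover k).trans (closure_mono (subset_iUnion (fun k => ⋃ m, E k m) k))

/-- For `κ ≤ 𝔠`: every product of at most `κ` many `e`-separable spaces is
`e`-separable iff every product of at most `κ` many discrete spaces is
`e`-separable. -/
theorem eSeparable_products_iff_discrete_products (κ : Cardinal.{u}) (hκ : κ ≤ 2 ^ ℵ₀) :
    (∀ (ι : Type u) (X : ι → Type u) [∀ i, TopologicalSpace (X i)] [∀ i, T1Space (X i)],
        #ι ≤ κ → (∀ i, ESeparable (X i)) → ESeparable (∀ i, X i)) ↔
    (∀ (ι : Type u) (X : ι → Type u) [∀ i, TopologicalSpace (X i)] [∀ i, DiscreteTopology (X i)],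
        #ι ≤ κ → ESeparable (∀ i, X i)) := by
  refine ⟨fun h ι X _ _ hι => h ι X hι fun _ => .of_discreteTopology, fun h ι X _ _ hι hX => ?_⟩
  refine .pi (hι.trans (two_power_aleph0 ▸ hκ)) hX fun D hD => ?_
  have := fun i => (hD i).2
  exact h ι (fun i => D i) hι
end

section
/- Let κ be an infinite cardinal, λ ≤ κ, and let (X_α)_{α<λ} be discrete topological spaces each of cardinality at least κ. Then the product space ∏_{α<λ} X_α is e-separable. -/
open Cardinal Set

universe u

/-- If every point has a neighborhood meeting `D` in at most itself, then `D` is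
closed discrete. -/
theorem closedDiscrete_of_separated {Y : Type u} [TopologicalSpace Y] {D : Set Y}
    (h : ∀ y : Y, ∃ U ∈ nhds y, ∀ x ∈ U ∩ D, x = y) : ClosedDiscrete D := by
  constructor
  · apply isClosed_of_closure_subset
    intro y hy
    obtain ⟨U, hU, hsub⟩ := h y
    obtain ⟨z, hzU, hzD⟩ := mem_closure_iff_nhds.mp hy U hU
    rwa [← hsub z ⟨hzU, hzD⟩]
  · rw [discreteTopology_subtype_iff]
    intro y hyD
    rw [Filter.inf_principal_eq_bot]
    obtain ⟨U, hU, hsub⟩ := h y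
    obtain ⟨o, hoU, ho, hyo⟩ := mem_nhds_iff.mp hU
    rw [mem_nhdsWithin]
    refine ⟨o, ho, hyo, ?_⟩
    rintro z ⟨hzo, hzny⟩ hzD
    exact hzny (hsub z ⟨hoU hzo, hzD⟩)

/-- For an infinite cardinal `κ`, the product of at most `κ` many discrete spaces
each of cardinality at least `κ` is `e`-separable. -/
theorem eSeparable_prod_of_large_discrete (κ : Cardinal.{u}) (hκ : ℵ₀ ≤ κ)
    (L : Cardinal.{u}) (hL : L ≤ κ)
    (X : L.out → Type u) [∀ a, TopologicalSpace (X a)] [∀ a, DiscreteTopology (X a)]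
    (hbig : ∀ a, κ ≤ #(X a)) :
    ESeparable (∀ a, X a) := by
  classical
  cases finite_or_infinite L.out with
  | inl hfin =>
    -- finite index: the product is discrete
    have : DiscreteTopology (∀ a, X a) := Pi.discreteTopology
    refine ⟨fun _ => univ, fun n => ⟨isClosed_univ, inferInstance⟩, ?_⟩
    rw [Set.iUnion_const]
    exact dense_univ
  | inr hinf =>
    -- embeddings of `Finset L.out` into each factor
    have hcard : ∀ a : L.out, #(Finset L.out) ≤ #(X a) := by
      intro a
      calc #(Finset L.out) = #L.out := Cardinal.mk_finset_of_infinite L.out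
        _ = L := Cardinal.mk_out L
        _ ≤ κ := hL
        _ ≤ #(X a) := hbig a
    have hj : ∀ a : L.out, Nonempty (Finset L.out ↪ X a) := fun a =>
      (Cardinal.le_def _ _).mp (hcard a)
    have j : ∀ a : L.out, Finset L.out ↪ X a := fun a => (hj a).some
    -- the point associated to a finite set `F` and a function `f`
    set pt : Finset L.out → (∀ a, X a) → (∀ a, X a) :=
      fun F f a => if a ∈ F then f a else j a F with hpt
    set D : ℕ → Set (∀ a, X a) :=
      fun n => {x | ∃ F : Finset L.out, F.card = n ∧ ∀ a ∉ F, x a = j a F} with hD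
    refine ⟨D, ?_, ?_⟩
    · -- each `D n` is closed discrete
      intro n
      apply closedDiscrete_of_separated
      intro y
      -- a set of `n+1` coordinates
      obtain ⟨G₀, hG₀⟩ := Infinite.exists_subset_card_eq L.out (n + 1)
      -- candidate sets `F`
      have hSfin : {F : Finset L.out | F.card = n ∧ ∃ a ∈ G₀, j a F = y a}.Finite := by
        have hsub : {F : Finset L.out | F.card = n ∧ ∃ a ∈ G₀, j a F = y a} ⊆
            ⋃ a ∈ (G₀ : Set L.out), (j a) ⁻¹' {y a} := by
          rintro F ⟨-, a, haG, hja⟩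
          exact Set.mem_biUnion (by simpa using haG) (by simpa using hja)
        refine Set.Finite.subset (Set.Finite.biUnion G₀.finite_toSet fun a _ => ?_) hsub
        have hss : Set.Subsingleton ((j a) ⁻¹' {y a}) := by
          intro F hF F' hF'
          apply (j a).injective
          simp only [Set.mem_preimage, Set.mem_singleton_iff] at hF hF'
          rw [hF, hF']
        exact hss.finite
      set CF : Finset (Finset L.out) := hSfin.toFinset with hCF
      -- disagreement points
      have hβ : ∀ F : Finset L.out, ∃ b : Finset L.out,
          (pt F y ≠ y → ∃ c ∈ b, pt F y c ≠ y c) := by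
        intro F
        by_cases h : pt F y = y
        · exact ⟨∅, fun hne => absurd h hne⟩
        · obtain ⟨c, hc⟩ := Function.ne_iff.mp h
          exact ⟨{c}, fun _ => ⟨c, Finset.mem_singleton_self c, hc⟩⟩
      choose β hβ using hβ
      set G : Finset L.out := G₀ ∪ CF.sup id ∪ CF.sup β with hG
      refine ⟨Set.pi (↑G : Set L.out) (fun a => {y a}), ?_, ?_⟩
      · exact (isOpen_set_pi G.finite_toSet (fun a _ => isOpen_discrete _)).mem_nhds
          (by intro a _; rfl)
      · rintro x ⟨hxG, F, hFcard, hFx⟩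
        have hxGy : ∀ a ∈ G, x a = y a := fun a ha => hxG a ha
        -- G₀ has a point off F
        have hnotsub : ¬ (G₀ ⊆ F) := by
          intro hsub
          have := Finset.card_le_card hsub
          omega
        obtain ⟨a₀, ha₀G, ha₀F⟩ := Finset.not_subset.mp hnotsub
        -- F is a candidate
        have hFC : F ∈ CF := by
          rw [hCF, Set.Finite.mem_toFinset]
          refine ⟨hFcard, a₀, ha₀G, ?_⟩
          rw [← hFx a₀ ha₀F]
          refine hxGy a₀ ?_
          simp only [hG, Finset.mem_union]
          exact Or.inl (Or.inl ha₀G)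
        -- F ⊆ G
        have hFG : F ⊆ G := by
          intro a haF
          have : F ⊆ CF.sup id := Finset.le_sup (f := id) hFC
          simp only [hG, Finset.mem_union]
          exact Or.inl (Or.inr (this haF))
        -- x = pt F y
        have hxpt : x = pt F y := by
          funext a
          by_cases haF : a ∈ F
          · simp only [hpt, if_pos haF]
            exact hxGy a (hFG haF)
          · simp only [hpt, if_neg haF]
            exact hFx a haF
        -- pt F y = y
        by_contra hxy
        have hne : pt F y ≠ y := fun h => hxy (hxpt.trans h)
        obtain ⟨c, hcβ, hc⟩ := hβ F hne
        have hcG : c ∈ G := by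
          have : β F ⊆ CF.sup β := Finset.le_sup hFC
          simp only [hG, Finset.mem_union]
          exact Or.inr (this hcβ)
        exact hc (hxpt ▸ hxGy c hcG)
    · -- density
      rw [dense_iff_inter_open]
      intro U hU ⟨x, hx⟩
      obtain ⟨F, u, hFu, hsub⟩ := isOpen_pi_iff.mp hU x hx
      refine ⟨pt F x, hsub ?_, Set.mem_iUnion.mpr ⟨F.card, F, rfl, ?_⟩⟩
      · intro a haF
        have haF' : a ∈ F := by simpa using haF
        simp only [hpt]
        rw [if_pos haF']
        exact (hFu a haF').2
      · intro a haF
        simp only [hpt, if_neg haF]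
end
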